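/- Let F be a field of characteristic p > 0 with #F ≥ t, m ≥ 1, t ≥ 2, and let t_σ be the base-p digits of t. The (m−1, t−1)-nucleus of the Veronese variety V_m^t has projective dimension C(m+t, t) − Π_{σ∈ℕ} C(m + t_σ, t_σ) − 1. -/

import Mathlib

/-!
A vector `x` lies on every osculating hyperplane iff the polynomial `P_x(a) = ∑_e C(t; e) x_e a^e`
vanishes at every `a ≠ 0`, hence, being homogeneous of degree `t > 0`, on all of `F^{m+1}`.
Evaluating at the coordinate vectors shows that the pure powers `a_i^t` have coefficient zero, so
`P_x` has degree `< t ≤ #F` in each variable and the combinatorial Nullstellensatz gives `P_x = 0`.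
Thus the nucleus is the coordinate subspace on the `e` with `p ∣ C(t; e)`, of codimension
`N(t) = #{e | p ∤ C(t; e)}`. By Lucas' theorem `p ∤ C(t; e)` iff the last base-`p` digits of the
`e_i` add up without carry and `p ∤ C(t / p; e / p)`, so `e ↦ (e % p, e / p)` gives
`N(t) = C(m + t_0, t_0) · N(t / p)`, whence `N(t) = ∏_σ C(m + t_σ, t_σ)`.
-/

/-- The index set `E^t_m` of `(m+1)`-tuples of non-negative integers summing to `t`,
indexing the basis `{c_e}` of the ambient space of the Veronese variety `V_m^t`. -/
abbrev VeroIdx (m t : ℕ) : Type := {e : Fin (m + 1) → ℕ // e ∈ Finset.Nat.antidiagonalTuple (m + 1) t}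

/-- The linear form, in the coordinates with respect to the basis `{c_e}`, whose kernel
is the osculating hyperplane of the Veronese variety `V_m^t` corresponding to the
hyperplane `Σ a_i X_i = 0` of the parameter space: its `e`-th coefficient is
`C(t; e_0,…,e_m) · a_0^{e_0} ⋯ a_m^{e_m}`. -/
noncomputable def veroForm (F : Type) [Field F] (m t : ℕ) (a : Fin (m + 1) → F) :
    (VeroIdx m t → F) →ₗ[F] F :=
  ∑ e : VeroIdx m t,
    ((Nat.multinomial Finset.univ e.1 : F) * ∏ i, a i ^ e.1 i) • LinearMap.proj e

/-- The `(m−1, t−1)`-nucleus of the Veronese variety `V_m^t`: the intersection of all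
its osculating hyperplanes. -/
noncomputable def veroNucleus (F : Type) [Field F] (m t : ℕ) :
    Submodule F (VeroIdx m t → F) :=
  ⨅ (a : Fin (m + 1) → F) (_ : a ≠ 0), LinearMap.ker (veroForm F m t a)

/-- The σ-th digit of `x` in base `p`. -/
def digit (p x σ : ℕ) : ℕ := x / p ^ σ % p

open Finset

namespace Nat

variable {ι : Type*} {p : ℕ}

theorem sum_mod_add_mul_sum_div (s : Finset ι) (f : ι → ℕ) (p : ℕ) :
    ∑ i ∈ s, f i % p + p * ∑ i ∈ s, f i / p = ∑ i ∈ s, f i := by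
  rw [mul_sum, ← sum_add_distrib]
  exact sum_congr rfl fun i _ ↦ mod_add_div (f i) p

theorem sum_mod_of_sum_mod_lt {s : Finset ι} {f : ι → ℕ} (h : ∑ i ∈ s, f i % p < p) :
    (∑ i ∈ s, f i) % p = ∑ i ∈ s, f i % p := by
  rw [← sum_mod_add_mul_sum_div s f p, add_mul_mod_self_left, mod_eq_of_lt h]

theorem sum_div_of_sum_mod_lt {s : Finset ι} {f : ι → ℕ} (h : ∑ i ∈ s, f i % p < p) :
    (∑ i ∈ s, f i) / p = ∑ i ∈ s, f i / p := by
  rw [← sum_mod_add_mul_sum_div s f p, add_mul_div_left _ _ (zero_lt_of_lt h), div_eq_of_lt h,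
    zero_add]

theorem Prime.not_dvd_choose_of_lt (hp : p.Prime) {n k : ℕ} (hk : k ≤ n) (hn : n < p) :
    ¬ p ∣ n.choose k := fun h ↦ by
  have : p ∣ n ! := by
    rw [← choose_mul_factorial_mul_factorial hk]
    exact (h.mul_right _).mul_right _
  exact absurd (hp.dvd_factorial.mp this) (not_le.mpr hn)

theorem Prime.not_dvd_choose_add_iff (hp : p.Prime) (a b : ℕ) :
    ¬ p ∣ (a + b).choose a ↔ a % p + b % p < p ∧ ¬ p ∣ (a / p + b / p).choose (a / p) := by
  have := Fact.mk hp
  rw [(Choose.choose_modEq_choose_mod_mul_choose_div_nat (p := p)).dvd_iff dvd_rfl,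
    hp.prime.dvd_mul, not_or]
  by_cases hab : a % p + b % p < p
  · have hmod : (a + b) % p = a % p + b % p := by rw [add_mod, mod_eq_of_lt hab]
    have hdiv : (a + b) / p = a / p + b / p := by
      rw [Nat.add_div hp.pos, if_neg (not_le.mpr hab), add_zero]
    simp only [hmod, hdiv, hab, true_and, and_iff_right_iff_imp]
    exact fun _ ↦ hp.not_dvd_choose_of_lt le_self_add hab
  · have hlt : (a + b) % p < a % p := by
      have := mod_lt a hp.pos
      have := mod_lt b hp.pos
      rw [add_mod, mod_eq_sub_mod (not_lt.mp hab), mod_eq_of_lt (by omega)]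
      omega
    simp [hab, choose_eq_zero_of_lt hlt]

theorem Prime.not_dvd_multinomial_iff (hp : p.Prime) (s : Finset ι) (f : ι → ℕ) :
    ¬ p ∣ multinomial s f ↔ ∑ i ∈ s, f i % p < p ∧ ¬ p ∣ multinomial s (f · / p) := by
  induction s using Finset.cons_induction with
  | empty => simp [hp.pos, hp.one_lt.ne']
  | cons a s ha ih =>
    rw [multinomial_cons, multinomial_cons, hp.prime.dvd_mul, hp.prime.dvd_mul, not_or, not_or,
      ih, hp.not_dvd_choose_add_iff, sum_cons]
    by_cases hs : ∑ i ∈ s, f i % p < p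
    · rw [sum_mod_of_sum_mod_lt hs, sum_div_of_sum_mod_lt hs]
      tauto
    · have : ¬ f a % p + ∑ i ∈ s, f i % p < p := by omega
      tauto

end Nat

section Digits

variable {p : ℕ}

theorem digit_zero_right (x : ℕ) : digit p x 0 = x % p := by
  simp [digit]

theorem digit_succ (x σ : ℕ) : digit p x (σ + 1) = digit p (x / p) σ := by
  simp [digit, pow_succ', Nat.div_div_eq_div_mul]

theorem digit_eq_zero_of_le (hp : 1 < p) {x σ : ℕ} (h : x ≤ σ) : digit p x σ = 0 := by
  rw [digit, Nat.div_eq_of_lt ((Nat.lt_pow_self hp).trans_le (Nat.pow_le_pow_right hp.le h)),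
    Nat.zero_mod]

theorem prod_range_choose_digit_of_le (hp : 1 < p) (k : ℕ) {x N : ℕ} (h : x + 1 ≤ N) :
    ∏ σ ∈ range N, (k + digit p x σ).choose (digit p x σ) =
      ∏ σ ∈ range (x + 1), (k + digit p x σ).choose (digit p x σ) := by
  refine (prod_subset (range_subset_range.mpr h) fun σ _ hσ ↦ ?_).symm
  rw [digit_eq_zero_of_le hp (by rw [mem_range, not_lt] at hσ; omega), Nat.choose_zero_right]

end Digits

namespace Finset.Nat

variable {p : ℕ}

theorem card_antidiagonalTuple (k n : ℕ) :
    #(antidiagonalTuple (k + 1) n) = (k + n).choose n := by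
  rw [← piAntidiag_univ_fin_eq_antidiagonalTuple, ← map_sym_eq_piAntidiag, card_map, sym_univ,
    card_univ, Sym.card_sym_eq_choose, Fintype.card_fin, add_right_comm, add_tsub_cancel_right]

theorem le_of_mem_antidiagonalTuple {k n : ℕ} {e : Fin k → ℕ} (he : e ∈ antidiagonalTuple k n)
    (i : Fin k) : e i ≤ n :=
  mem_antidiagonalTuple.mp he ▸ single_le_sum (fun j _ ↦ Nat.zero_le (e j)) (mem_univ i)

theorem sum_erase_of_mem_antidiagonalTuple {k n : ℕ} {e : Fin k → ℕ}
    (he : e ∈ antidiagonalTuple k n) (i : Fin k) : ∑ j ∈ univ.erase i, e j = n - e i := by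
  rw [← mem_antidiagonalTuple.mp he, ← add_sum_erase univ e (mem_univ i), add_tsub_cancel_left]

theorem eq_single_of_mem_antidiagonalTuple {k n : ℕ} {e : Fin k → ℕ}
    (he : e ∈ antidiagonalTuple k n) {i : Fin k} (hi : e i = n) : e = Pi.single i n := by
  have hrest := sum_erase_of_mem_antidiagonalTuple he i
  rw [hi, tsub_self, sum_eq_zero_iff] at hrest
  funext j
  rcases eq_or_ne j i with rfl | hj
  · rw [Pi.single_eq_same, hi]
  · rw [Pi.single_eq_of_ne hj, hrest j (mem_erase.mpr ⟨hj, mem_univ j⟩)]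

theorem card_filter_not_dvd_multinomial_eq_mul (hp : p.Prime) (k n : ℕ) :
    #{e ∈ antidiagonalTuple (k + 1) n | ¬ p ∣ Nat.multinomial univ e} =
      (k + n % p).choose (n % p) *
        #{e ∈ antidiagonalTuple (k + 1) (n / p) | ¬ p ∣ Nat.multinomial univ e} := by
  rw [← card_antidiagonalTuple, ← card_product]
  have hsplit : ∀ r ∈ antidiagonalTuple (k + 1) (n % p), ∀ q : Fin (k + 1) → ℕ, ∀ i,
      (r i + p * q i) % p = r i ∧ (r i + p * q i) / p = q i := fun r hr q i ↦ by
    have hri : r i < p := (le_of_mem_antidiagonalTuple hr i).trans_lt (Nat.mod_lt n hp.pos)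
    rw [Nat.add_mul_mod_self_left, Nat.mod_eq_of_lt hri, Nat.add_mul_div_left _ _ hp.pos,
      Nat.div_eq_of_lt hri, zero_add]
    exact ⟨rfl, rfl⟩
  refine card_nbij' (fun e ↦ (fun i ↦ e i % p, fun i ↦ e i / p))
    (fun q i ↦ q.1 i + p * q.2 i) ?_ ?_ ?_ ?_
  · intro e he
    rw [mem_coe, mem_filter, mem_antidiagonalTuple, hp.not_dvd_multinomial_iff] at he
    obtain ⟨rfl, hcarry, hdvd⟩ := he
    simp only [mem_coe, mem_product, mem_filter, mem_antidiagonalTuple]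
    exact ⟨(Nat.sum_mod_of_sum_mod_lt hcarry).symm, (Nat.sum_div_of_sum_mod_lt hcarry).symm, hdvd⟩
  · rintro ⟨r, q⟩ hrq
    simp only [mem_coe, mem_product, mem_filter, mem_antidiagonalTuple] at hrq
    obtain ⟨hr, hq, hdvd⟩ := hrq
    rw [mem_coe, mem_filter, mem_antidiagonalTuple, hp.not_dvd_multinomial_iff]
    simp only [hsplit r (mem_antidiagonalTuple.mpr hr) q]
    refine ⟨?_, hr ▸ Nat.mod_lt n hp.pos, hdvd⟩
    rw [sum_add_distrib, ← mul_sum, hr, hq, Nat.mod_add_div]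
  · intro e _
    funext i
    exact Nat.mod_add_div (e i) p
  · rintro ⟨r, q⟩ hrq
    simp only [coe_product, Set.mem_prod, mem_coe] at hrq
    ext i <;> simp [hsplit r hrq.1 q i]

theorem card_filter_not_dvd_multinomial (hp : p.Prime) (k n : ℕ) :
    #{e ∈ antidiagonalTuple (k + 1) n | ¬ p ∣ Nat.multinomial univ e} =
      ∏ σ ∈ range (n + 1), (k + digit p n σ).choose (digit p n σ) := by
  induction n using Nat.strong_induction_on with
  | _ n ih =>
    rcases n.eq_zero_or_pos with rfl | hn
    · simp [antidiagonalTuple_zero_right, filter_singleton, digit, Nat.multinomial, hp.ne_one]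
    have hdiv : n / p < n := Nat.div_lt_self hn hp.one_lt
    rw [card_filter_not_dvd_multinomial_eq_mul hp, ih _ hdiv,
      ← prod_range_choose_digit_of_le hp.one_lt k hdiv, prod_range_succ' _ n, mul_comm]
    simp only [digit_succ, digit_zero_right]

end Finset.Nat

theorem LinearMap.finrank_ker_funLeft (K : Type*) [Field K] {ι κ : Type*} [Fintype ι] [Fintype κ]
    {f : κ → ι} (hf : Function.Injective f) :
    Module.finrank K (ker (funLeft K K f)) = Fintype.card ι - Fintype.card κ := by
  have := (funLeft K K f).finrank_range_add_finrank_ker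
  rw [range_eq_top.mpr (funLeft_surjective_of_injective K K f hf), finrank_top,
    Module.finrank_fintype_fun_eq_card, Module.finrank_fintype_fun_eq_card] at this
  omega

section Veronese

open MvPolynomial Finset.Nat

variable {F : Type} [Field F] {m t : ℕ}

theorem veroForm_apply (a : Fin (m + 1) → F) (x : VeroIdx m t → F) :
    veroForm F m t a x =
      ∑ e : VeroIdx m t, (Nat.multinomial univ e.1 * x e) * ∏ i, a i ^ e.1 i := by
  simp [veroForm, mul_right_comm]

theorem mem_veroNucleus {x : VeroIdx m t → F} :
    x ∈ veroNucleus F m t ↔ ∀ a, a ≠ 0 → veroForm F m t a x = 0 := by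
  simp [veroNucleus, Submodule.mem_iInf]

theorem veroForm_zero (ht : t ≠ 0) : veroForm F m t 0 = 0 := by
  refine LinearMap.ext fun x ↦ ?_
  rw [veroForm_apply, LinearMap.zero_apply]
  refine sum_eq_zero fun e _ ↦ ?_
  obtain ⟨i, -, hi⟩ := exists_ne_zero_of_sum_ne_zero (mem_antidiagonalTuple.mp e.2 ▸ ht)
  rw [prod_eq_zero (mem_univ i) (by rw [Pi.zero_apply, zero_pow hi]), mul_zero]

theorem apply_eq_zero_of_mem_veroNucleus {x : VeroIdx m t → F} (hx : x ∈ veroNucleus F m t)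
    {e : VeroIdx m t} {i : Fin (m + 1)} (hei : e.1 i = t) : x e = 0 := by
  have hcoord : ∀ e' : VeroIdx m t,
      ∏ j, (Pi.single i (1 : F) : Fin (m + 1) → F) j ^ e'.1 j = 0 ^ (t - e'.1 i) := fun e' ↦ by
    rw [← mul_prod_erase univ _ (mem_univ i), Pi.single_eq_same, one_pow, one_mul,
      ← sum_erase_of_mem_antidiagonalTuple e'.2, ← prod_pow_eq_pow_sum]
    exact prod_congr rfl fun j hj ↦ by rw [Pi.single_eq_of_ne (ne_of_mem_erase hj)]
  have h := mem_veroNucleus.mp hx (Pi.single i 1) (Pi.single_ne_zero_iff.mpr one_ne_zero)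
  rwa [veroForm_apply, sum_eq_single e, hcoord, hei, tsub_self, pow_zero, mul_one,
    eq_single_of_mem_antidiagonalTuple e.2 hei, Nat.multinomial_single, Nat.cast_one, one_mul]
    at h
  · intro e' _ he'
    have : e'.1 i ≠ t := fun h' ↦ he' (Subtype.ext (by
      rw [eq_single_of_mem_antidiagonalTuple e'.2 h', eq_single_of_mem_antidiagonalTuple e.2 hei]))
    rw [hcoord, zero_pow (by have := le_of_mem_antidiagonalTuple e'.2 i; omega), mul_zero]
  · simp

noncomputable def veroPoly (x : VeroIdx m t → F) : MvPolynomial (Fin (m + 1)) F :=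
  ∑ e : VeroIdx m t, monomial (Finsupp.equivFunOnFinite.symm e.1) (Nat.multinomial univ e.1 * x e)

theorem eval_veroPoly (a : Fin (m + 1) → F) (x : VeroIdx m t → F) :
    eval a (veroPoly x) = veroForm F m t a x := by
  simp [veroPoly, veroForm_apply, eval_monomial, Finsupp.prod_fintype]

theorem coeff_veroPoly (x : VeroIdx m t → F) (e : VeroIdx m t) :
    coeff (Finsupp.equivFunOnFinite.symm e.1) (veroPoly x) = Nat.multinomial univ e.1 * x e := by
  rw [veroPoly, coeff_sum, sum_eq_single e (fun e' _ he' ↦ ?_) (by simp), coeff_monomial,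
    if_pos rfl]
  rw [coeff_monomial, if_neg]
  exact fun h ↦ he' (Subtype.ext (Finsupp.equivFunOnFinite.symm.injective h))

theorem degreeOf_veroPoly_lt (ht : t ≠ 0) {x : VeroIdx m t → F}
    (hx : ∀ (e : VeroIdx m t) i, e.1 i = t → x e = 0) (i : Fin (m + 1)) :
    degreeOf i (veroPoly x) < t := by
  classical
  rw [degreeOf_lt_iff (Nat.pos_of_ne_zero ht)]
  intro d hd
  obtain ⟨e, -, he⟩ := mem_biUnion.mp (support_sum hd)
  rw [support_monomial] at he
  split_ifs at he with hc
  · simp at he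
  rw [mem_singleton.mp he, Finsupp.equivFunOnFinite_symm_apply_apply]
  refine (le_of_mem_antidiagonalTuple e.2 i).lt_of_ne fun hei ↦ hc ?_
  rw [hx e i hei, mul_zero]

theorem mem_veroNucleus_iff (ht : t ≠ 0) (hF : (t : Cardinal) ≤ Cardinal.mk F)
    {x : VeroIdx m t → F} :
    x ∈ veroNucleus F m t ↔ ∀ e : VeroIdx m t, (Nat.multinomial univ e.1 : F) * x e = 0 := by
  refine ⟨fun hx ↦ ?_, fun h ↦ mem_veroNucleus.mpr fun a _ ↦ by simp [veroForm_apply, h]⟩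
  have heval : ∀ a, eval a (veroPoly x) = 0 := fun a ↦ by
    rw [eval_veroPoly]
    rcases eq_or_ne a 0 with rfl | ha
    · rw [veroForm_zero ht, LinearMap.zero_apply]
    · exact mem_veroNucleus.mp hx a ha
  obtain ⟨ι⟩ : Nonempty (Fin t ↪ F) := by rwa [← Cardinal.mk_fin, Cardinal.le_def] at hF
  have hdeg := degreeOf_veroPoly_lt ht fun e _ hei ↦ apply_eq_zero_of_mem_veroNucleus hx hei
  have hzero : veroPoly x = 0 :=
    eq_zero_of_eval_zero_at_prod_finset _ (fun _ ↦ univ.map ι) (by simpa using hdeg)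
      fun a _ ↦ heval a
  intro e
  rw [← coeff_veroPoly, hzero, coeff_zero]

theorem veroNucleus_eq_ker_funLeft (ht : t ≠ 0) (hF : (t : Cardinal) ≤ Cardinal.mk F) :
    veroNucleus F m t = LinearMap.ker (LinearMap.funLeft F F
      (Subtype.val : {e : VeroIdx m t // (Nat.multinomial univ e.1 : F) ≠ 0} → VeroIdx m t)) := by
  ext x
  simp [mem_veroNucleus_iff ht hF, funext_iff, or_iff_not_imp_left]

theorem card_veroIdx : Fintype.card (VeroIdx m t) = (m + t).choose t := by
  rw [Fintype.card_coe, card_antidiagonalTuple]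

theorem card_veroIdx_multinomial_ne_zero [DecidableEq F] (p : ℕ) [CharP F p] :
    Fintype.card {e : VeroIdx m t // (Nat.multinomial univ e.1 : F) ≠ 0} =
      #{e ∈ antidiagonalTuple (m + 1) t | ¬ p ∣ Nat.multinomial univ e} := by
  rw [Fintype.card_congr (Equiv.subtypeEquivRight fun e ↦ (CharP.cast_eq_zero_iff F p _).not),
    Fintype.card_subtype, univ_eq_attach, filter_attach (¬ p ∣ Nat.multinomial univ ·), card_map,
    card_attach]

end Veronese

theorem veroNucleus_finrank_general (F : Type) [Field F] (p : ℕ) (hp : p.Prime) [CharP F p]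
    (m t : ℕ) (ht : 2 ≤ t) (hF : (t : Cardinal) ≤ Cardinal.mk F) :
    Module.finrank F (veroNucleus F m t)
      = Nat.choose (m + t) t -
          ∏ σ ∈ Finset.range (t + 1), Nat.choose (m + digit p t σ) (digit p t σ) := by
  classical
  rw [veroNucleus_eq_ker_funLeft (by omega) hF,
    LinearMap.finrank_ker_funLeft F Subtype.val_injective, card_veroIdx,
    card_veroIdx_multinomial_ne_zero p, Finset.Nat.card_filter_not_dvd_multinomial hp]

/-- Over a field of characteristic `p > 0` with `#F ≥ t`, the `(m−1, t−1)`-nucleus of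
the Veronese variety `V_m^t` has projective dimension
`C(m+t, t) − ∏_σ C(m + t_σ, t_σ) − 1`, i.e. vector-space dimension
`C(m+t, t) − ∏_σ C(m + t_σ, t_σ)`, where `t_σ` are the base-`p` digits of `t`.
(Digits with index `σ > t` vanish and `C(m+0,0) = 1`, so the product over `σ < t+1`
is the full product.) -/
theorem veroNucleus_finrank (F : Type) [Field F] (p : ℕ) (hp : p.Prime) [CharP F p]
    (m t : ℕ) (hm : 1 ≤ m) (ht : 2 ≤ t) (hF : (t : Cardinal) ≤ Cardinal.mk F) :
    Module.finrank F (veroNucleus F m t)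
      = Nat.choose (m + t) t -
          ∏ σ ∈ Finset.range (t + 1), Nat.choose (m + digit p t σ) (digit p t σ) :=
  veroNucleus_finrank_general F p hp m t ht hF
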